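/- For real coupling constants J₁, J₂, J₃, define for a triple of vectors s = (s₁,s₂,s₃) in ℝ³ the map 𝒥(s) := ((J₂ s₃ + J₃ s₂) × s₁, (J₃ s₁ + J₁ s₃) × s₂, (J₁ s₂ + J₂ s₁) × s₃). Let r = (r₁,r₂,r₃) : ℝ → (ℝ³)³ be differentiable, let Z : ℝ → SO(3) be differentiable with Ż(t) = Z(t)Ω(t) for some matrix-valued function Ω, and set s(t) := (Z(t)r₁(t), Z(t)r₂(t), Z(t)r₃(t)). Then ṡ(t) − 𝒥(s(t)) = Z(t)·(Ω(t)r(t) + ṙ(t) − 𝒥(r(t))) (applied componentwise). In particular, s satisfies the equations of motion ṡ = 𝒥(s) if and only if Ω(t)r(t) + ṙ(t) − 𝒥(r(t)) = 0 for all t. -/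

import Mathlib

open Matrix

/-- The map `𝒥` appearing on the right-hand side of the equations of motion of the classical
spin triangle: for a triple of vectors `s = (s 0, s 1, s 2)` in ℝ³,
`𝒥(s) = ((J₂ s₃ + J₃ s₂) × s₁, (J₃ s₁ + J₁ s₃) × s₂, (J₁ s₂ + J₂ s₁) × s₃)`. -/
def spinJ (J₁ J₂ J₃ : ℝ) (s : Fin 3 → Fin 3 → ℝ) : Fin 3 → Fin 3 → ℝ :=
  ![crossProduct (J₂ • s 2 + J₃ • s 1) (s 0),
    crossProduct (J₃ • s 0 + J₁ • s 2) (s 1),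
    crossProduct (J₁ • s 1 + J₂ • s 0) (s 2)]

/-! Rotations commute with the cross product, so `𝒥(Z r) = Z 𝒥(r)`, and the product rule with
`Ż = ZΩ` gives `ṡ = Z(Ωr + ṙ)`. Subtracting, `ṡ - 𝒥(s) = Z(Ωr + ṙ - 𝒥(r))`, and since `Z` is
invertible the two sides vanish together. -/

namespace Matrix

variable {R : Type*} [CommRing R]

theorem transpose_mulVec_cross_mulVec (M : Matrix (Fin 3) (Fin 3) R) (a b : Fin 3 → R) :
    Mᵀ *ᵥ ((M *ᵥ a) ⨯₃ (M *ᵥ b)) = M.det • (a ⨯₃ b) := by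
  ext i
  fin_cases i <;>
    simp [cross_apply, mulVec, dotProduct, Fin.sum_univ_three, det_fin_three] <;> ring

theorem mulVec_cross_of_mem_specialOrthogonalGroup {M : Matrix (Fin 3) (Fin 3) R}
    (hM : M ∈ specialOrthogonalGroup (Fin 3) R) (a b : Fin 3 → R) :
    M *ᵥ (a ⨯₃ b) = (M *ᵥ a) ⨯₃ (M *ᵥ b) := by
  obtain ⟨horth, hdet⟩ := mem_specialOrthogonalGroup_iff.1 hM
  rw [← one_smul R (a ⨯₃ b), ← hdet, ← transpose_mulVec_cross_mulVec, mulVec_mulVec,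
    (mem_orthogonalGroup_iff _ _).1 horth, one_mulVec]

theorem mulVec_injective_of_mem_specialOrthogonalGroup {n : Type*} [Fintype n] [DecidableEq n]
    {M : Matrix n n R} (hM : M ∈ specialOrthogonalGroup n R) :
    Function.Injective M.mulVec :=
  mulVec_injective_of_isUnit <| (isUnit_iff_isUnit_det M).2 <|
    (mem_specialOrthogonalGroup_iff.1 hM).2 ▸ isUnit_one

end Matrix

theorem spinJ_mulVec {Q : Matrix (Fin 3) (Fin 3) ℝ} (hQ : Q ∈ specialOrthogonalGroup (Fin 3) ℝ)
    (J₁ J₂ J₃ : ℝ) (s : Fin 3 → Fin 3 → ℝ) (μ : Fin 3) :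
    spinJ J₁ J₂ J₃ (fun ν => Q *ᵥ s ν) μ = Q *ᵥ spinJ J₁ J₂ J₃ s μ := by
  fin_cases μ <;>
    simp [spinJ, mulVec_cross_of_mem_specialOrthogonalGroup hQ, mulVec_add, mulVec_smul]

theorem HasDerivAt.mulVec {𝕜 m n : Type*} [NontriviallyNormedField 𝕜] [Fintype m] [Fintype n]
    {A : 𝕜 → Matrix m n 𝕜} {A' : Matrix m n 𝕜} {v : 𝕜 → n → 𝕜} {v' : n → 𝕜} {x : 𝕜}
    (hA : ∀ i j, HasDerivAt (fun t => A t i j) (A' i j) x) (hv : HasDerivAt v v' x) :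
    HasDerivAt (fun t => A t *ᵥ v t) (A' *ᵥ v x + A x *ᵥ v') x := by
  refine hasDerivAt_pi.2 fun i => ?_
  have hvj := hasDerivAt_pi.1 hv
  have h := HasDerivAt.fun_sum (u := Finset.univ) fun j _ => (hA i j).mul (hvj j)
  rw [Finset.sum_add_distrib] at h
  exact h

theorem rotated_configuration_eom (J₁ J₂ J₃ : ℝ)
    (r : ℝ → Fin 3 → Fin 3 → ℝ)
    (Z : ℝ → Matrix (Fin 3) (Fin 3) ℝ)
    (Ω : ℝ → Matrix (Fin 3) (Fin 3) ℝ)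
    (hr : ∀ μ : Fin 3, Differentiable ℝ fun t => r t μ)
    (hZdiff : ∀ i j : Fin 3, Differentiable ℝ fun t => Z t i j)
    (hZSO : ∀ t, Z t ∈ Matrix.specialOrthogonalGroup (Fin 3) ℝ)
    (hZderiv : ∀ t (i j : Fin 3), deriv (fun τ => Z τ i j) t = (Z t * Ω t) i j)
    (s : ℝ → Fin 3 → Fin 3 → ℝ)
    (hs : ∀ t (μ : Fin 3), s t μ = (Z t).mulVec (r t μ)) :
    (∀ t (μ : Fin 3),
      deriv (fun τ => s τ μ) t - spinJ J₁ J₂ J₃ (s t) μ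
        = (Z t).mulVec
            ((Ω t).mulVec (r t μ) + deriv (fun τ => r τ μ) t - spinJ J₁ J₂ J₃ (r t) μ)) ∧
    ((∀ t (μ : Fin 3), deriv (fun τ => s τ μ) t = spinJ J₁ J₂ J₃ (s t) μ) ↔
      (∀ t (μ : Fin 3),
        (Ω t).mulVec (r t μ) + deriv (fun τ => r τ μ) t - spinJ J₁ J₂ J₃ (r t) μ = 0)) := by
  have hs_deriv (t : ℝ) (μ : Fin 3) : HasDerivAt (fun τ => s τ μ)
      ((Z t * Ω t) *ᵥ r t μ + Z t *ᵥ deriv (fun τ => r τ μ) t) t := by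
    simp only [hs]
    exact .mulVec (fun i j => hZderiv t i j ▸ (hZdiff i j t).hasDerivAt) (hr μ t).hasDerivAt
  have hdefect (t : ℝ) (μ : Fin 3) : deriv (fun τ => s τ μ) t - spinJ J₁ J₂ J₃ (s t) μ
      = Z t *ᵥ (Ω t *ᵥ r t μ + deriv (fun τ => r τ μ) t - spinJ J₁ J₂ J₃ (r t) μ) := by
    rw [(hs_deriv t μ).deriv, funext (hs t), spinJ_mulVec (hZSO t), mulVec_sub, mulVec_add,
      mulVec_mulVec]
  refine ⟨hdefect, fun heom t μ => ?_, fun h0 t μ => ?_⟩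
  · apply mulVec_injective_of_mem_specialOrthogonalGroup (hZSO t)
    rw [← hdefect, heom, sub_self, mulVec_zero]
  · rw [← sub_eq_zero, hdefect, h0, mulVec_zero]
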